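/- Let ρ ∈ (0,1) and θ = arccos(√ρ). Suppose real sequences {a_t}, {b_t} satisfy a_0 = b_0 = 0, a_1 = b_1, and a_{t+1} = ρ(2a_t - a_{t-1}) + b_t - b_{t-1} for all t ≥ 1. Then for all t ≥ 0, a_{t+1} sin θ = a_1 ρ^{t/2} sin((t+1)θ) + Σ_{s=1}^t (b_s - b_{s-1}) ρ^{(t-s)/2} sin((t+1-s)θ). -/
import Mathlib

theorem stmt_6 (ρ : ℝ) (hρ : 0 < ρ ∧ ρ < 1) (θ : ℝ) (hθ : θ = Real.arccos (Real.sqrt ρ))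
    (a b : ℕ → ℝ) (ha0 : a 0 = 0) (hb0 : b 0 = 0) (hab1 : a 1 = b 1)
    (hrec : ∀ t, 1 ≤ t → a (t + 1) = ρ * (2 * a t - a (t - 1)) + b t - b (t - 1)) :
    ∀ t : ℕ,
      a (t + 1) * Real.sin θ =
        a 1 * ρ ^ ((t : ℝ) / 2) * Real.sin ((t + 1 : ℝ) * θ) +
          ∑ s ∈ Finset.Icc 1 t,
            (b s - b (s - 1)) * ρ ^ (((t : ℝ) - (s : ℝ)) / 2) * Real.sin (((t : ℝ) + 1 - s) * θ) := by
  obtain ⟨hρ0, hρ1⟩ := hρ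
  have hsnn := Real.sqrt_nonneg ρ
  have hss : Real.sqrt ρ * Real.sqrt ρ = ρ := Real.mul_self_sqrt hρ0.le
  have hcos : Real.cos θ = Real.sqrt ρ := by
    rw [hθ, Real.cos_arccos]
    · linarith
    · nlinarith
  have hrhalf : ρ ^ ((1:ℝ)/2) = Real.sqrt ρ := (Real.sqrt_eq_rpow ρ).symm
  obtain ⟨u, hud⟩ : ∃ u : ℕ → ℝ, ∀ n : ℕ, u n = ρ ^ ((n : ℝ) / 2) * Real.sin (((n : ℝ) + 1) * θ) :=
    ⟨_, fun n => rfl⟩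
  have key : ∀ x : ℝ, Real.sin (x + θ) = 2 * Real.sin x * Real.cos θ - Real.sin (x - θ) := by
    intro x; rw [Real.sin_add, Real.sin_sub]; ring
  have hu : ∀ t : ℕ, u (t + 2) = ρ * (2 * u (t + 1) - u t) := by
    intro t
    have e1 : ρ ^ (((t:ℝ)+2)/2) = ρ * ρ ^ ((t:ℝ)/2) := by
      rw [show ((t:ℝ)+2)/2 = 1 + (t:ℝ)/2 by ring, Real.rpow_add hρ0, Real.rpow_one]
    have e2 : ρ ^ (((t:ℝ)+2)/2) = Real.sqrt ρ * ρ ^ (((t:ℝ)+1)/2) := by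
      rw [show ((t:ℝ)+2)/2 = 1/2 + ((t:ℝ)+1)/2 by ring, Real.rpow_add hρ0, ← hrhalf]
    have hsin : Real.sin (((t:ℝ)+2+1) * θ) =
        2 * Real.sin (((t:ℝ)+1+1) * θ) * Real.sqrt ρ - Real.sin (((t:ℝ)+1) * θ) := by
      have := key (((t:ℝ)+2) * θ)
      rw [show ((t:ℝ)+2)*θ + θ = ((t:ℝ)+2+1)*θ by ring, show ((t:ℝ)+2)*θ - θ = ((t:ℝ)+1)*θ by ring,
        hcos] at this
      rw [this, show ((t:ℝ)+1+1)*θ = ((t:ℝ)+2)*θ by ring]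
    rw [hud, hud, hud]
    push_cast
    rw [hsin]
    linear_combination (2 * Real.sin (((t:ℝ)+1+1) * θ) * Real.sqrt ρ) * e2
      - Real.sin (((t:ℝ)+1) * θ) * e1
      + (2 * ρ ^ (((t:ℝ)+1)/2) * Real.sin (((t:ℝ)+1+1) * θ)) * hss
  have hu0 : u 0 = Real.sin θ := by
    rw [hud]; norm_num
  have hu1 : u 1 = 2 * ρ * Real.sin θ := by
    rw [hud]
    push_cast
    rw [show ((1:ℝ)+1)*θ = θ + θ by ring, Real.sin_add, hcos, hrhalf]
    linear_combination 2 * Real.sin θ * hss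
  suffices H : ∀ t : ℕ, a (t+1) * Real.sin θ =
      a 1 * u t + ∑ s ∈ Finset.Icc 1 t, (b s - b (s-1)) * u (t - s) by
    intro t
    rw [H t]
    congr 1
    · rw [hud]; ring
    · refine Finset.sum_congr rfl fun s hs => ?_
      obtain ⟨hs1, hs2⟩ := Finset.mem_Icc.mp hs
      rw [hud, Nat.cast_sub hs2]
      ring
  intro t
  induction t using Nat.twoStepInduction with
  | zero => simp [hu0]
  | one =>
    have h2 := hrec 1 le_rfl
    simp only [show (1:ℕ)+1 = 2 from rfl, show (1:ℕ)-1 = 0 from rfl, ha0, hb0] at h2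
    rw [h2]
    rw [Finset.sum_Icc_succ_top (by norm_num : (1:ℕ) ≤ 1)]
    simp [hu0, hu1, hb0]
    ring
  | more t IH1 IH2 =>
    have h3 := hrec (t+2) (by omega)
    simp only [show t+2-1 = t+1 from rfl] at h3
    have e1 : ∀ s ∈ Finset.Icc 1 t,
        (b s - b (s-1)) * u (t+2-s)
          = ρ * (2 * ((b s - b (s-1)) * u (t+1-s))) - ρ * ((b s - b (s-1)) * u (t-s)) := by
      intro s hs
      obtain ⟨hs1, hs2⟩ := Finset.mem_Icc.mp hs
      rw [show t+2-s = (t-s)+2 by omega, show t+1-s = (t-s)+1 by omega, hu (t-s)]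
      ring
    have hsum2 : ∑ s ∈ Finset.Icc 1 (t+2), (b s - b (s-1)) * u (t+2-s)
        = (∑ s ∈ Finset.Icc 1 t, (b s - b (s-1)) * u (t+2-s))
          + (b (t+1) - b t) * u 1 + (b (t+2) - b (t+1)) * u 0 := by
      rw [Finset.sum_Icc_succ_top (by omega : (1:ℕ) ≤ t+2),
        Finset.sum_Icc_succ_top (by omega : (1:ℕ) ≤ t+1)]
      simp only [show t+2-(t+2) = 0 by omega, show t+2-(t+1) = 1 by omega,
        show t+2-1 = t+1 from rfl, show t+1-1 = t from rfl]
    have hsum1 : ∑ s ∈ Finset.Icc 1 (t+1), (b s - b (s-1)) * u (t+1-s)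
        = (∑ s ∈ Finset.Icc 1 t, (b s - b (s-1)) * u (t+1-s)) + (b (t+1) - b t) * u 0 := by
      rw [Finset.sum_Icc_succ_top (by omega : (1:ℕ) ≤ t+1)]
      simp only [show t+1-(t+1) = 0 by omega, show t+1-1 = t from rfl]
    have hsplit : ∑ s ∈ Finset.Icc 1 t, (b s - b (s-1)) * u (t+2-s)
        = ρ * (2 * ∑ s ∈ Finset.Icc 1 t, (b s - b (s-1)) * u (t+1-s))
          - ρ * ∑ s ∈ Finset.Icc 1 t, (b s - b (s-1)) * u (t-s) := by
      rw [Finset.sum_congr rfl e1, Finset.sum_sub_distrib, ← Finset.mul_sum, ← Finset.mul_sum,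
        ← Finset.mul_sum]
    rw [hsum1] at IH2
    have ha3 : a (t+2+1) * Real.sin θ
        = ρ * (2 * (a (t+1+1) * Real.sin θ) - a (t+1) * Real.sin θ)
          + (b (t+2) - b (t+1)) * Real.sin θ := by
      rw [h3]; ring
    rw [hsum2, hsplit, hu t, hu1, ha3, IH1, IH2, hu0]
    ring
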